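/- Let R be a commutative graded Q-algebra with R_d = 0 for d > N, let Δ ∈ R be a mixed-degree element, let M be an abelian group, and let Q : M → R_1 be a quadratic form. Assume that for every A ∈ M the degree-(g+1) component of exp(Q(A))·Δ is zero, with 0 ≤ g < N. Then for all A, B ∈ M: [exp(Q(A))Δ]_g · [exp(Q(B))Δ]_g = [exp(Q(A))Δ]_g · [exp(Q(A+B))Δ]_g, where [x]_d denotes the degree-d component. -/
import Mathlib

open Finset DirectSum

section PixtonAux

variable {R : Type*} [CommRing R] [Algebra ℚ R]

/-- Truncated exponential. -/
private def texp (N : ℕ) (x : R) : R := ∑ n ∈ range (N + 1), (n.factorial : ℚ)⁻¹ • x ^ n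

variable (𝒜 : ℕ → Submodule ℚ R) [GradedAlgebra 𝒜]

private lemma pow1_mem {a : R} (ha : a ∈ 𝒜 1) (n : ℕ) : a ^ n ∈ 𝒜 n := by
  simpa using SetLike.pow_mem_graded n ha

variable {N : ℕ}

private lemma mul_pow_vanish (hN : ∀ d, N < d → 𝒜 d = ⊥) {a b : R} (ha : a ∈ 𝒜 1)
    (hb : b ∈ 𝒜 1) {i j : ℕ} (h : N < i + j) : a ^ i * b ^ j = 0 := by
  have hm : a ^ i * b ^ j ∈ 𝒜 (i + j) :=
    SetLike.mul_mem_graded (pow1_mem 𝒜 ha i) (pow1_mem 𝒜 hb j)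
  rw [hN _ h] at hm
  simpa using hm

private lemma fac_inv_choose {i k : ℕ} (h : i ≤ k) :
    (k.factorial : ℚ)⁻¹ * (k.choose i : ℚ) =
      (i.factorial : ℚ)⁻¹ * ((k - i).factorial : ℚ)⁻¹ := by
  have h1 : (k.choose i : ℚ) * (i.factorial : ℚ) * ((k - i).factorial : ℚ) = (k.factorial : ℚ) := by
    exact_mod_cast Nat.choose_mul_factorial_mul_factorial h
  have h2 : (i.factorial : ℚ) ≠ 0 := Nat.cast_ne_zero.2 i.factorial_ne_zero
  have h3 : ((k - i).factorial : ℚ) ≠ 0 := Nat.cast_ne_zero.2 (k - i).factorial_ne_zero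
  have h4 : (k.factorial : ℚ) ≠ 0 := Nat.cast_ne_zero.2 k.factorial_ne_zero
  field_simp
  linear_combination h1

private lemma texp_add (hN : ∀ d, N < d → 𝒜 d = ⊥) {a b : R} (ha : a ∈ 𝒜 1) (hb : b ∈ 𝒜 1) :
    texp N (a + b) = texp N a * texp N b := by
  classical
  have key : texp N (a + b)
      = ∑ p ∈ (range (N + 1) ×ˢ range (N + 1)).filter (fun p => p.1 + p.2 ≤ N),
          ((p.1.factorial : ℚ)⁻¹ * (p.2.factorial : ℚ)⁻¹) • (a ^ p.1 * b ^ p.2) := by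
    rw [texp]
    have h1 : ∀ k ∈ range (N + 1), (k.factorial : ℚ)⁻¹ • (a + b) ^ k
        = ∑ i ∈ range (k + 1),
            ((i.factorial : ℚ)⁻¹ * ((k - i).factorial : ℚ)⁻¹) • (a ^ i * b ^ (k - i)) := by
      intro k _
      rw [add_pow, Finset.smul_sum]
      refine Finset.sum_congr rfl fun i hi => ?_
      rw [Finset.mem_range] at hi
      have hik : i ≤ k := Nat.lt_succ_iff.mp hi
      rw [← fac_inv_choose hik]
      have : a ^ i * b ^ (k - i) * (k.choose i : R) = (k.choose i : ℚ) • (a ^ i * b ^ (k - i)) := by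
        rw [mul_comm, ← nsmul_eq_mul, ← Nat.cast_smul_eq_nsmul ℚ]
      rw [this, smul_smul]
    rw [Finset.sum_congr rfl h1, Finset.sum_sigma']
    refine Finset.sum_nbij' (fun p => (p.2, p.1 - p.2)) (fun p => ⟨p.1 + p.2, p.1⟩) ?_ ?_ ?_ ?_ ?_
    · rintro ⟨k, i⟩ hp
      simp only [Finset.mem_sigma, Finset.mem_range] at hp
      dsimp only
      simp only [Finset.mem_filter, Finset.mem_product, Finset.mem_range]
      omega
    · rintro ⟨i, j⟩ hp
      simp only [Finset.mem_filter, Finset.mem_product, Finset.mem_range] at hp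
      dsimp only
      simp only [Finset.mem_sigma, Finset.mem_range]
      omega
    · rintro ⟨k, i⟩ hp
      simp only [Finset.mem_sigma, Finset.mem_range] at hp
      dsimp only
      rw [Nat.add_sub_cancel' (by omega : i ≤ k)]
    · rintro ⟨i, j⟩ hp
      simp only [Finset.mem_filter, Finset.mem_product, Finset.mem_range] at hp
      dsimp only
      simp only [Prod.mk.injEq, true_and]
      omega
    · rintro ⟨k, i⟩ _
      rfl
  have hRHS : texp N a * texp N b
      = ∑ p ∈ range (N + 1) ×ˢ range (N + 1),
          ((p.1.factorial : ℚ)⁻¹ * (p.2.factorial : ℚ)⁻¹) • (a ^ p.1 * b ^ p.2) := by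
    rw [texp, texp, Finset.sum_mul_sum, ← Finset.sum_product']
    refine Finset.sum_congr rfl fun p _ => ?_
    rw [smul_mul_smul_comm]
  rw [key, hRHS]
  refine Finset.sum_subset (Finset.filter_subset _ _) fun p hp hnp => ?_
  have hgt : N < p.1 + p.2 := by
    simp only [Finset.mem_filter, hp, true_and, not_le] at hnp
    exact hnp
  rw [mul_pow_vanish 𝒜 hN ha hb hgt, smul_zero]

private lemma proj_one_mul (g : ℕ) {b : R} (x : R) (hb : b ∈ 𝒜 1) :
    GradedAlgebra.proj 𝒜 (g + 1) (b * x) = b * GradedAlgebra.proj 𝒜 g x := by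
  rw [GradedAlgebra.proj_apply, GradedAlgebra.proj_apply,
    DirectSum.coe_decompose_mul_of_left_mem_of_le 𝒜 hb (by omega : 1 ≤ g + 1)]
  rw [Nat.add_sub_cancel]

private lemma poly_coeff_zero {V : Type*} [AddCommGroup V] [Module ℚ V] (D : ℕ) (c : ℕ → V)
    (h : ∀ n : ℕ, ∑ t ∈ range (D + 1), ((n : ℚ) ^ t) • c t = 0) (t : ℕ) (ht : t < D + 1) :
    c t = 0 := by
  classical
  let W : Matrix (Fin (D + 1)) (Fin (D + 1)) ℚ :=
    Matrix.vandermonde (fun i : Fin (D + 1) => ((i : ℕ) : ℚ))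
  have hdet : IsUnit W.det := by
    rw [isUnit_iff_ne_zero, Matrix.det_vandermonde]
    refine Finset.prod_ne_zero_iff.mpr fun i _ => Finset.prod_ne_zero_iff.mpr fun j hj => ?_
    rw [Finset.mem_Ioi] at hj
    have hlt : (i : ℕ) < (j : ℕ) := hj
    have : ((i : ℕ) : ℚ) ≠ ((j : ℕ) : ℚ) := by exact_mod_cast hlt.ne
    exact sub_ne_zero.2 (Ne.symm this)
  have hinv : W⁻¹ * W = 1 := Matrix.nonsing_inv_mul W hdet
  have hfin : ∀ n : Fin (D + 1), ∑ s : Fin (D + 1), W n s • c (s : ℕ) = 0 := by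
    intro n
    have h0 := h (n : ℕ)
    rw [← Fin.sum_univ_eq_sum_range (fun t => (((n : ℕ) : ℚ) ^ t) • c t) (D + 1)] at h0
    simpa [W, Matrix.vandermonde] using h0
  have key : ∀ i : Fin (D + 1), c (i : ℕ) = 0 := by
    intro i
    calc c (i : ℕ)
        = ∑ s : Fin (D + 1), (1 : Matrix (Fin (D + 1)) (Fin (D + 1)) ℚ) i s • c (s : ℕ) := by
          simp [Matrix.one_apply, ite_smul]
      _ = ∑ s : Fin (D + 1), (∑ n : Fin (D + 1), W⁻¹ i n * W n s) • c (s : ℕ) := by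
          refine Finset.sum_congr rfl fun s _ => ?_
          rw [← Matrix.mul_apply, hinv]
      _ = ∑ n : Fin (D + 1), W⁻¹ i n • ∑ s : Fin (D + 1), W n s • c (s : ℕ) := by
          simp_rw [Finset.sum_smul, mul_smul, Finset.smul_sum]
          rw [Finset.sum_comm]
      _ = 0 := by simp [hfin]
  exact key ⟨t, ht⟩

end PixtonAux

open Finset in
/-- Abstract multiplicativity of Pixton's class on the treelike locus: if
`R` is a graded commutative `ℚ`-algebra vanishing in degrees `> N`, `Q` is a
quadratic form on an abelian group `M` valued in degree-one elements, and
`[exp(Q(A))·Δ]_{g+1} = 0` for all `A`, then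
`[exp(Q(A))Δ]_g · [exp(Q(B))Δ]_g = [exp(Q(A))Δ]_g · [exp(Q(A+B))Δ]_g`. -/
theorem pixton_multiplicativity_abstract {R : Type*} [CommRing R] [Algebra ℚ R]
    (𝒜 : ℕ → Submodule ℚ R) [GradedAlgebra 𝒜] (N : ℕ)
    (hN : ∀ d, N < d → 𝒜 d = ⊥)
    {M : Type*} [AddCommGroup M] (Q : M → R)
    (hQmem : ∀ A, Q A ∈ 𝒜 1)
    (hhom : ∀ (n : ℤ) (x : M), Q (n • x) = (n ^ 2 : ℤ) • Q x)
    (hadd₁ : ∀ x x' u : M,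
      Q (x + x' + u) - Q (x + x') - Q u =
        (Q (x + u) - Q x - Q u) + (Q (x' + u) - Q x' - Q u))
    (hadd₂ : ∀ x u u' : M,
      Q (x + (u + u')) - Q x - Q (u + u') =
        (Q (x + u) - Q x - Q u) + (Q (x + u') - Q x - Q u'))
    (Δ : R) (g : ℕ) (hg : g < N)
    (hrel : ∀ A : M, GradedAlgebra.proj 𝒜 (g + 1)
      ((∑ n ∈ range (N + 1), (n.factorial : ℚ)⁻¹ • Q A ^ n) * Δ) = 0)
    (A B : M) :
    GradedAlgebra.proj 𝒜 g ((∑ n ∈ range (N + 1), (n.factorial : ℚ)⁻¹ • Q A ^ n) * Δ) *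
      GradedAlgebra.proj 𝒜 g ((∑ n ∈ range (N + 1), (n.factorial : ℚ)⁻¹ • Q B ^ n) * Δ) =
    GradedAlgebra.proj 𝒜 g ((∑ n ∈ range (N + 1), (n.factorial : ℚ)⁻¹ • Q A ^ n) * Δ) *
      GradedAlgebra.proj 𝒜 g
        ((∑ n ∈ range (N + 1), (n.factorial : ℚ)⁻¹ • Q (A + B) ^ n) * Δ) := by
  classical
  have hrel' : ∀ X : M, GradedAlgebra.proj 𝒜 (g + 1) (texp N (Q X) * Δ) = 0 := hrel
  show GradedAlgebra.proj 𝒜 g (texp N (Q A) * Δ) *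
      GradedAlgebra.proj 𝒜 g (texp N (Q B) * Δ) =
    GradedAlgebra.proj 𝒜 g (texp N (Q A) * Δ) *
      GradedAlgebra.proj 𝒜 g (texp N (Q (A + B)) * Δ)
  set PA := GradedAlgebra.proj 𝒜 g (texp N (Q A) * Δ) with hPAdef
  have hQ0 : Q 0 = 0 := by
    have h := hhom 0 A
    simpa using h
  -- Key step: for every C, (Q (A + C) - Q A - Q C) * PA = 0.
  have key : ∀ C : M, (Q (A + C) - Q A - Q C) * PA = 0 := by
    intro C
    set b := Q (A + C) - Q A - Q C with hbdef
    have hbmem : b ∈ 𝒜 1 := sub_mem (sub_mem (hQmem _) (hQmem _)) (hQmem _)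
    set q := Q C with hqdef
    have hqmem : q ∈ 𝒜 1 := hQmem C
    have hβn : ∀ n : ℕ, Q (A + n • C) - Q A - Q (n • C) = (n : ℚ) • b := by
      intro n
      induction n with
      | zero => simp [hQ0]
      | succ n ih =>
        rw [succ_nsmul, hadd₂ A (n • C) C, ih, ← hbdef]
        push_cast
        rw [add_smul, one_smul]
    have hQn : ∀ n : ℕ, Q (n • C) = ((n : ℚ)) ^ 2 • q := by
      intro n
      have h := hhom (n : ℤ) C
      rw [natCast_zsmul] at h
      rw [h, ← Int.cast_smul_eq_zsmul ℚ]
      congr 1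
    have hQA : ∀ n : ℕ,
        Q (A + n • C) = Q A + ((n : ℚ) • b + ((n : ℚ)) ^ 2 • q) := by
      intro n
      have h1 := hβn n
      have h2 : Q (A + n • C) = (Q (A + n • C) - Q A - Q (n • C)) + Q A + Q (n • C) := by abel
      rw [h2, h1, hQn n]
      abel
    -- Expansion of the relation as a polynomial in n.
    have Hn : ∀ n : ℕ, texp N (Q (A + n • C)) * Δ =
        ∑ i ∈ range (N + 1), ∑ j ∈ range (N + 1), ((n : ℚ)) ^ (i + 2 * j) •
          (((i.factorial : ℚ)⁻¹ * (j.factorial : ℚ)⁻¹) •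
            (b ^ i * q ^ j * (texp N (Q A) * Δ))) := by
      intro n
      have hm1 : ((n : ℚ)) • b ∈ 𝒜 1 := Submodule.smul_mem _ _ hbmem
      have hm2 : ((n : ℚ)) ^ 2 • q ∈ 𝒜 1 := Submodule.smul_mem _ _ hqmem
      rw [hQA n, texp_add 𝒜 hN (hQmem A) (add_mem hm1 hm2), texp_add 𝒜 hN hm1 hm2]
      set EA := texp N (Q A) with hEA
      rw [texp, texp, Finset.sum_mul_sum]
      rw [Finset.mul_sum, Finset.sum_mul]
      refine Finset.sum_congr rfl fun i _ => ?_
      rw [Finset.mul_sum, Finset.sum_mul]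
      refine Finset.sum_congr rfl fun j _ => ?_
      rw [smul_pow, smul_pow]
      simp only [Algebra.smul_def, map_mul, map_pow]
      ring
    have hX : ∀ n : ℕ, ∑ p ∈ range (N + 1) ×ˢ range (N + 1),
        ((n : ℚ)) ^ (p.1 + 2 * p.2) •
          (((p.1.factorial : ℚ)⁻¹ * (p.2.factorial : ℚ)⁻¹) • GradedAlgebra.proj 𝒜 (g + 1)
            (b ^ p.1 * q ^ p.2 * (texp N (Q A) * Δ))) = 0 := by
      intro n
      have h0 := hrel' (A + n • C)
      rw [Hn n] at h0
      simp only [map_sum, LinearMap.map_smul] at h0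
      rw [← Finset.sum_product'] at h0
      exact h0
    set u : ℕ × ℕ → R := fun p =>
      ((p.1.factorial : ℚ)⁻¹ * (p.2.factorial : ℚ)⁻¹) • GradedAlgebra.proj 𝒜 (g + 1)
        (b ^ p.1 * q ^ p.2 * (texp N (Q A) * Δ)) with hudef
    set c : ℕ → R := fun t =>
      ∑ p ∈ (range (N + 1) ×ˢ range (N + 1)).filter (fun p => p.1 + 2 * p.2 = t), u p with hcdef
    have hsum : ∀ n : ℕ, ∑ t ∈ range (3 * N + 1), ((n : ℚ)) ^ t • c t = 0 := by
      intro n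
      have step1 : ∑ t ∈ range (3 * N + 1), ((n : ℚ)) ^ t • c t
          = ∑ t ∈ range (3 * N + 1),
              ∑ p ∈ (range (N + 1) ×ˢ range (N + 1)).filter (fun p => p.1 + 2 * p.2 = t),
                ((n : ℚ)) ^ (p.1 + 2 * p.2) • u p := by
        refine Finset.sum_congr rfl fun t _ => ?_
        rw [hcdef, Finset.smul_sum]
        refine Finset.sum_congr rfl fun p hp => ?_
        rw [(Finset.mem_filter.1 hp).2]
      rw [step1, Finset.sum_fiberwise_of_maps_to (fun p hp => ?_)]
      · exact hX n
      · simp only [Finset.mem_product, Finset.mem_range] at hp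
        exact Finset.mem_range.2 (by omega)
    have h1lt : (1:ℕ) < 3 * N + 1 := by omega
    have hc1 : c 1 = 0 := poly_coeff_zero (3 * N) c hsum 1 h1lt
    have hc1' : c 1 = u (1, 0) := by
      rw [hcdef]
      refine Finset.sum_eq_single_of_mem (1, 0) ?_ fun p hp hne => ?_
      · exact Finset.mem_filter.mpr ⟨Finset.mem_product.mpr
          ⟨Finset.mem_range.mpr (by omega), Finset.mem_range.mpr (by omega)⟩, by norm_num⟩
      · exfalso
        apply hne
        obtain ⟨i, j⟩ := p
        simp only [Finset.mem_filter, Finset.mem_product, Finset.mem_range] at hp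
        simp only [Prod.mk.injEq]
        omega
    have hu10 : u (1, 0) = b * PA := by
      rw [hudef]
      simp only [Nat.factorial_one, Nat.factorial_zero, Nat.cast_one, inv_one, one_mul,
        pow_one, pow_zero, mul_one, one_smul]
      rw [proj_one_mul 𝒜 g _ hbmem, hPAdef]
    rw [hc1', hu10] at hc1
    exact hc1
  -- Deduce that u = Q A + (Q (A+B) - Q A - Q B) annihilates PA.
  have h4A : Q (A + A) = (4 : ℚ) • Q A := by
    have h := hhom 2 A
    rw [two_smul] at h
    rw [h, ← Int.cast_smul_eq_zsmul ℚ]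
    norm_num
  have hm : Q (A + (A + (B + B))) - Q A - Q (A + (B + B)) =
      (2 : ℚ) • (Q A + (Q (A + B) - Q A - Q B)) := by
    rw [hadd₂ A A (B + B), hadd₂ A B B, h4A]
    module
  have hu' : (Q A + (Q (A + B) - Q A - Q B)) * PA = 0 := by
    have h1 := key (A + (B + B))
    rw [hm, smul_mul_assoc] at h1
    have h2 := congrArg (fun y => ((2 : ℚ))⁻¹ • y) h1
    simpa [smul_smul] using h2
  -- Conclusion.
  set w : R := Q A + (Q (A + B) - Q A - Q B) with hwdef
  have hwmem : w ∈ 𝒜 1 := add_mem (hQmem A) (sub_mem (sub_mem (hQmem _) (hQmem _)) (hQmem _))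
  have hsplit : texp N (Q (A + B)) = texp N (Q B) * texp N w := by
    rw [← texp_add 𝒜 hN (hQmem B) hwmem, hwdef]
    congr 1
    ring
  have hexpand : texp N w =
      1 + w * ∑ n ∈ range N, ((n + 1).factorial : ℚ)⁻¹ • w ^ n := by
    rw [texp, Finset.sum_range_succ']
    simp only [pow_zero, Nat.factorial_zero, Nat.cast_one, inv_one, one_smul]
    rw [add_comm]
    congr 1
    rw [Finset.mul_sum]
    refine Finset.sum_congr rfl fun i _ => ?_
    rw [mul_smul_comm, ← pow_succ']
  set T : R := texp N (Q B) * (∑ n ∈ range N, ((n + 1).factorial : ℚ)⁻¹ • w ^ n) * Δ with hTdef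
  have hδ : texp N (Q (A + B)) * Δ = texp N (Q B) * Δ + w * T := by
    rw [hsplit, hexpand, hTdef]
    ring
  have hproj : PA * GradedAlgebra.proj 𝒜 g (w * T) = 0 := by
    rcases Nat.eq_zero_or_pos g with hg0 | hg1
    · have : GradedAlgebra.proj 𝒜 g (w * T) = 0 := by
        subst hg0
        rw [GradedAlgebra.proj_apply,
          DirectSum.coe_decompose_mul_of_left_mem_of_not_le 𝒜 hwmem (by omega)]
      rw [this, mul_zero]
    · obtain ⟨g', rfl⟩ : ∃ g', g = g' + 1 := ⟨g - 1, by omega⟩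
      have hww : GradedAlgebra.proj 𝒜 (g' + 1) (w * T) =
          w * ((DirectSum.decompose 𝒜 T (g' + 1 - 1) : R)) := by
        rw [GradedAlgebra.proj_apply,
          DirectSum.coe_decompose_mul_of_left_mem_of_le 𝒜 hwmem (by omega : 1 ≤ g' + 1)]
      rw [hww, show PA * (w * ((DirectSum.decompose 𝒜 T (g' + 1 - 1) : R))) =
        (w * PA) * ((DirectSum.decompose 𝒜 T (g' + 1 - 1) : R)) from by ring, hu', zero_mul]
  rw [hδ, map_add, mul_add, hproj, add_zero]
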